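/- arXiv:2103.09164 — 2 statements merged into one kernel-verified Lean document; each statement's English description precedes it below -/
import Mathlib

section
/- Let V_maven(q) = P[Binom(2N,q) < N] + (1/2)·P[Binom(2N,q) = N] for q in [0,1/2]. Then V_maven'(q) = -C(2N-1, N)·N·q^{N-1}(1-q)^{N-1}, and in particular V_maven'(0) = 0 for N ≥ 2. -/
/-- The probability mass function of a binomial random variable with `n` trials
and success probability `p`, evaluated at `k`. -/
noncomputable def binomPMF (n : ℕ) (p : ℝ) (k : ℕ) : ℝ :=
  (n.choose k : ℝ) * p ^ k * (1 - p) ^ (n - k)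

/-!
Differentiating `C(n,k) q^k (1-q)^(n-k)` and using `k C(n,k) = n C(n-1,k-1)` and
`(n-k) C(n,k) = n C(n-1,k)` gives
`d/dq P[Binom(n,q) = k] = n (P[Binom(n-1,q) = k-1] - P[Binom(n-1,q) = k])`.
Summing over `j ≤ k` telescopes to `d/dq P[Binom(n,q) ≤ k] = -n P[Binom(n-1,q) = k]`.
For `n = 2N`, `V_maven = P[Binom(2N,q) ≤ N-1] + P[Binom(2N,q) = N] / 2`, so its derivative is
`-N (P[Binom(2N-1,q) = N-1] + P[Binom(2N-1,q) = N])`, which collapses by the symmetry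
`C(2N-1,N-1) = C(2N-1,N)` and `(1-q) + q = 1`.
-/

lemma hasDerivAt_one_sub_pow (n : ℕ) (q : ℝ) :
    HasDerivAt (fun q : ℝ => (1 - q) ^ n) (-(n * (1 - q) ^ (n - 1))) q := by
  simpa using ((hasDerivAt_id q).const_sub 1).fun_pow n

lemma hasDerivAt_binomPMF_zero (n : ℕ) (q : ℝ) :
    HasDerivAt (binomPMF n · 0) (-(n * binomPMF (n - 1) q 0)) q := by
  simpa [binomPMF] using hasDerivAt_one_sub_pow n q

lemma hasDerivAt_binomPMF_succ (n k : ℕ) (q : ℝ) :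
    HasDerivAt (binomPMF n · (k + 1))
      (n * (binomPMF (n - 1) q k - binomPMF (n - 1) q (k + 1))) q := by
  rcases n with _ | m
  · simpa [binomPMF] using hasDerivAt_const q (0 : ℝ)
  have hpmf := ((hasDerivAt_pow (k + 1) q).const_mul ((m + 1).choose (k + 1) : ℝ)).fun_mul
    (hasDerivAt_one_sub_pow (m - k) q)
  have hlow : (k + 1) * (m + 1).choose (k + 1) = (m + 1) * m.choose k := by
    rw [Nat.add_one_mul_choose_eq, mul_comm]
  have hhigh : (m - k) * (m + 1).choose (k + 1) = (m + 1) * m.choose (k + 1) := by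
    rw [mul_comm, mul_comm (m + 1), Nat.choose_mul_succ_eq, Nat.add_sub_add_right]
  simp only [binomPMF, Nat.add_sub_add_right, Nat.add_sub_cancel]
  refine hpmf.congr_deriv ?_
  rw [← Nat.cast_inj (R := ℝ)] at hlow hhigh
  push_cast at hlow hhigh ⊢
  linear_combination (q ^ k * (1 - q) ^ (m - k)) * hlow
    - (q ^ (k + 1) * (1 - q) ^ (m - (k + 1))) * hhigh

lemma hasDerivAt_binomCDF (n k : ℕ) (q : ℝ) :
    HasDerivAt (fun q => ∑ j ∈ Finset.range (k + 1), binomPMF n q j)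
      (-(n * binomPMF (n - 1) q k)) q := by
  induction k with
  | zero => simpa using hasDerivAt_binomPMF_zero n q
  | succ k ih =>
    simp_rw [Finset.sum_range_succ _ (k + 1)]
    refine (ih.add (hasDerivAt_binomPMF_succ n k q)).congr_deriv ?_
    ring

lemma hasDerivAt_maven (N : ℕ) (hN : 0 < N) (q : ℝ) :
    HasDerivAt
      (fun q : ℝ => (∑ k ∈ Finset.range N, binomPMF (2 * N) q k)
        + (1 / 2) * binomPMF (2 * N) q N)
      (-(((2 * N - 1).choose N : ℝ)) * N * q ^ (N - 1) * (1 - q) ^ (N - 1)) q := by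
  obtain ⟨M, rfl⟩ := Nat.exists_eq_add_of_le' hN
  have hderiv := (hasDerivAt_binomCDF (2 * (M + 1)) M q).add
    ((hasDerivAt_binomPMF_succ (2 * (M + 1)) M q).const_mul (1 / 2 : ℝ))
  have hodd : 2 * (M + 1) - 1 = 2 * M + 1 := by omega
  refine hderiv.congr_deriv ?_
  simp only [binomPMF, hodd, Nat.add_sub_cancel, ← Nat.choose_symm_half M,
    show 2 * M + 1 - M = M + 1 by omega, show 2 * M + 1 - (M + 1) = M by omega]
  push_cast
  ring

/-- V_maven(q) = P[Binom(2N,q) < N] + (1/2)P[Binom(2N,q) = N] has derivative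
-C(2N-1,N) N q^{N-1} (1-q)^{N-1} on [0,1/2]; in particular the derivative at 0
is 0 when N ≥ 2. -/
theorem stmt_1 (N : ℕ) (hN : 2 ≤ N) :
    (∀ q ∈ Set.Icc (0:ℝ) (1/2),
      HasDerivAt
        (fun q : ℝ => (∑ k ∈ Finset.range N, binomPMF (2*N) q k)
          + (1/2) * binomPMF (2*N) q N)
        (-(((2*N-1).choose N : ℝ)) * N * q ^ (N-1) * (1 - q) ^ (N-1)) q) ∧
    HasDerivAt
      (fun q : ℝ => (∑ k ∈ Finset.range N, binomPMF (2*N) q k)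
        + (1/2) * binomPMF (2*N) q N) 0 0 := by
  refine ⟨fun q _ => hasDerivAt_maven N (by omega) q, ?_⟩
  simpa [zero_pow (show N - 1 ≠ 0 by omega)] using hasDerivAt_maven N (by omega) 0
end

section
/- For any fixed h ∈ (0,1), the supremum over q ∈ [0,1/2] of U_N(q) = -h(1-q)^N + (1-h)(P[Binom(2N,q)<N] + (1/2)P[Binom(2N,q)=N]) converges to 1-h as N → ∞, and U_N(q) ≤ 1-h for all q and N. -/
noncomputable def U (N : ℕ) (h q : ℝ) : ℝ :=
  -h * (1 - q) ^ N
    + (1 - h) * ((∑ k ∈ Finset.range N, binomPMF (2*N) q k)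
        + (1/2) * binomPMF (2*N) q N)

open Finset Filter Topology

lemma binomPMF_nonneg {p : ℝ} (hp0 : 0 ≤ p) (hp1 : p ≤ 1) (n k : ℕ) :
    0 ≤ binomPMF n p k := by
  have : 0 ≤ 1 - p := by linarith
  unfold binomPMF
  positivity

lemma sum_binomPMF (n : ℕ) (p : ℝ) : ∑ k ∈ range (n + 1), binomPMF n p k = 1 := by
  have h := add_pow p (1 - p) n
  rw [add_sub_cancel, one_pow] at h
  rw [h]
  refine sum_congr rfl fun k _ => ?_
  unfold binomPMF
  ring

lemma pow_mul_one_sub_pow_le {p : ℝ} (hp0 : 0 ≤ p) (hp : p ≤ 1 / 2) {N k : ℕ}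
    (hNk : N ≤ k) (hk : k ≤ 2 * N) :
    p ^ k * (1 - p) ^ (2 * N - k) ≤ (p * (1 - p)) ^ N := by
  obtain ⟨j, rfl⟩ := Nat.exists_eq_add_of_le hNk
  have hjN : j ≤ N := by omega
  have hpj : p ^ j ≤ (1 - p) ^ j := pow_le_pow_left₀ hp0 (by linarith) j
  calc p ^ (N + j) * (1 - p) ^ (2 * N - (N + j))
      = p ^ N * (p ^ j * (1 - p) ^ (N - j)) := by
        rw [show 2 * N - (N + j) = N - j by omega, pow_add]; ring
    _ ≤ p ^ N * ((1 - p) ^ j * (1 - p) ^ (N - j)) := by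
        have : 0 ≤ 1 - p := by linarith
        gcongr
    _ = (p * (1 - p)) ^ N := by rw [← pow_add, Nat.add_sub_cancel' hjN, mul_pow]

lemma sum_Ico_binomPMF_le {p : ℝ} (hp0 : 0 ≤ p) (hp : p ≤ 1 / 2) (N : ℕ) :
    ∑ k ∈ Ico N (2 * N + 1), binomPMF (2 * N) p k ≤ (4 * p * (1 - p)) ^ N := by
  calc ∑ k ∈ Ico N (2 * N + 1), binomPMF (2 * N) p k
      ≤ ∑ k ∈ Ico N (2 * N + 1), ((2 * N).choose k : ℝ) * (p * (1 - p)) ^ N := by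
        refine sum_le_sum fun k hk => ?_
        rw [mem_Ico] at hk
        rw [binomPMF, mul_assoc]
        gcongr
        exact pow_mul_one_sub_pow_le hp0 hp hk.1 (by omega)
    _ ≤ ∑ k ∈ range (2 * N + 1), ((2 * N).choose k : ℝ) * (p * (1 - p)) ^ N := by
        refine sum_le_sum_of_subset_of_nonneg ?_ fun k _ _ => ?_
        · exact range_eq_Ico (2 * N + 1) ▸ Ico_subset_Ico_left (Nat.zero_le N)
        have : 0 ≤ 1 - p := by linarith
        positivity
    _ = (4 * p * (1 - p)) ^ N := by
        rw [← sum_mul, ← Nat.cast_sum, Nat.sum_range_choose, pow_mul]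
        push_cast
        rw [← mul_pow]
        ring

lemma one_sub_pow_le_sum_range_binomPMF {p : ℝ} (hp0 : 0 ≤ p) (hp : p ≤ 1 / 2) (N : ℕ) :
    1 - (4 * p * (1 - p)) ^ N ≤ ∑ k ∈ range N, binomPMF (2 * N) p k := by
  have hsplit := sum_range_add_sum_Ico (binomPMF (2 * N) p) (show N ≤ 2 * N + 1 by omega)
  linarith [sum_binomPMF (2 * N) p, sum_Ico_binomPMF_le hp0 hp N]

lemma sum_range_binomPMF_add_half_le_one {p : ℝ} (hp0 : 0 ≤ p) (hp1 : p ≤ 1) (N : ℕ) :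
    ∑ k ∈ range N, binomPMF (2 * N) p k + 1 / 2 * binomPMF (2 * N) p N ≤ 1 := by
  have hsub : ∑ k ∈ range (N + 1), binomPMF (2 * N) p k ≤ 1 :=
    sum_binomPMF (2 * N) p ▸ sum_le_sum_of_subset_of_nonneg
      (range_subset_range.mpr (by omega)) fun k _ _ => binomPMF_nonneg hp0 hp1 _ k
  rw [sum_range_succ] at hsub
  linarith [binomPMF_nonneg hp0 hp1 (2 * N) N]

lemma U_le {h q : ℝ} (hh0 : 0 ≤ h) (hh1 : h ≤ 1) (hq0 : 0 ≤ q) (hq1 : q ≤ 1) (N : ℕ) :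
    U N h q ≤ 1 - h := by
  have hpow : 0 ≤ (1 - q) ^ N := pow_nonneg (by linarith) N
  have hS := sum_range_binomPMF_add_half_le_one hq0 hq1 N
  unfold U
  nlinarith

lemma le_U {h q : ℝ} (hh1 : h ≤ 1) (hq0 : 0 ≤ q) (hq : q ≤ 1 / 2) (N : ℕ) :
    (1 - h) * (1 - (4 * q * (1 - q)) ^ N) - h * (1 - q) ^ N ≤ U N h q := by
  have hS := one_sub_pow_le_sum_range_binomPMF hq0 hq N
  have hN := binomPMF_nonneg hq0 (by linarith) (2 * N) N
  unfold U
  nlinarith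

/-- For fixed h ∈ (0,1): U_N(q) ≤ 1-h for every N and q ∈ [0,1/2], and the
supremum of U_N over [0,1/2] converges to 1-h as N → ∞. -/
theorem stmt_6 (h : ℝ) (hh : h ∈ Set.Ioo (0:ℝ) 1) :
    (∀ N : ℕ, ∀ q ∈ Set.Icc (0:ℝ) (1/2), U N h q ≤ 1 - h) ∧
    Filter.Tendsto (fun N : ℕ => sSup (U N h '' Set.Icc (0:ℝ) (1/2)))
      Filter.atTop (nhds (1 - h)) := by
  have hle : ∀ N : ℕ, ∀ q ∈ Set.Icc (0:ℝ) (1/2), U N h q ≤ 1 - h :=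
    fun N q hq => U_le hh.1.le hh.2.le hq.1 (by linarith [hq.2]) N
  refine ⟨hle, ?_⟩
  have hquarter : (1 / 4 : ℝ) ∈ Set.Icc (0:ℝ) (1/2) := by norm_num
  have hbdd : ∀ N, BddAbove (U N h '' Set.Icc (0:ℝ) (1/2)) :=
    fun N => ⟨1 - h, Set.forall_mem_image.mpr (hle N)⟩
  have hupper : ∀ N, sSup (U N h '' Set.Icc (0:ℝ) (1/2)) ≤ 1 - h :=
    fun N => csSup_le ((Set.nonempty_of_mem hquarter).image _)
      (Set.forall_mem_image.mpr (hle N))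
  have hlower :
      ∀ N : ℕ, 1 - h - (3 / 4 : ℝ) ^ N ≤ sSup (U N h '' Set.Icc (0:ℝ) (1/2)) := by
    intro N
    have hU := le_U hh.2.le (by norm_num : (0:ℝ) ≤ 1 / 4) (by norm_num) N
    refine le_csSup_of_le (hbdd N) (Set.mem_image_of_mem _ hquarter) (le_of_eq_of_le ?_ hU)
    norm_num
    ring
  have hlim : Tendsto (fun N : ℕ => 1 - h - (3 / 4 : ℝ) ^ N) atTop (𝓝 (1 - h)) := by
    simpa using tendsto_const_nhds.sub
      (tendsto_pow_atTop_nhds_zero_of_lt_one (by norm_num : (0:ℝ) ≤ 3 / 4) (by norm_num))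
  exact tendsto_of_tendsto_of_tendsto_of_le_of_le hlim tendsto_const_nhds hlower hupper
end
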